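/- Let n ≥ 2 and suppose u : B^n → ℝ^n is given by u(x) = ∫_{S^{n-1}} P_h(x, η) φ(η) dσ(η) for some essentially bounded measurable φ : S^{n-1} → ℝ^n with u(0) = 0. Then for every x ∈ B^n with |x| = r, |u(x)| ≤ U_h(r e_n) · ‖φ‖_{L^∞}, where U_h = P_h[χ_{S_+^{n-1}} − χ_{S_-^{n-1}}]. -/

import Mathlib

/-
Since `u(0) = 0` and `P_h(0, ·) = 1`, the boundary datum `φ` has mean zero, so
`u(x) = ∫ (P_h(x, η) - c) φ(η) dσ` for every constant `c`, whence
`|u(x)| ≤ ‖φ‖_∞ ∫ |P_h(x, η) - c| dσ`. Rotating `x` to `|x| e_n` leaves this integral unchanged.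
Take for `c` the value of `P_h(|x| e_n, ·)` on the equator: `P_h(|x| e_n, η) - c` then has the
sign of `η_n`, i.e. of `χ₊ - χ₋`, and as `χ₊ - χ₋` has mean zero (reflect in the equator) the
integral equals `U_h(|x| e_n)`.
-/

open MeasureTheory Metric Real Set

noncomputable section

/-- Poisson–Szegő kernel `P_h(x,ζ) = ((1-|x|²)/|x-ζ|²)^(n-1)`. -/
def Ph (n : ℕ) (x ζ : EuclideanSpace ℝ (Fin n)) : ℝ :=
  ((1 - ‖x‖ ^ 2) / ‖x - ζ‖ ^ 2) ^ (n - 1)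

/-- The vector `e_n = (0,…,0,1)`. -/
def eLast (n : ℕ) : EuclideanSpace ℝ (Fin n) :=
  if h : 0 < n then EuclideanSpace.single (⟨n - 1, by omega⟩ : Fin n) (1 : ℝ) else 0

/-- The unit sphere `S^{n-1}` in `ℝⁿ`. -/
abbrev Sph (n : ℕ) := Metric.sphere (0 : EuclideanSpace ℝ (Fin n)) 1

/-- Normalized surface measure `σ` on the unit sphere, `σ(S^{n-1}) = 1`. -/
def sphereMeasure (n : ℕ) : Measure (Sph n) :=
  ((volume : Measure (EuclideanSpace ℝ (Fin n))).toSphere Set.univ)⁻¹ •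
    (volume : Measure (EuclideanSpace ℝ (Fin n))).toSphere

/-- Last coordinate `η_n` of a vector in `ℝⁿ`. -/
def lastCoord (n : ℕ) (η : EuclideanSpace ℝ (Fin n)) : ℝ :=
  if h : 0 < n then η (⟨n - 1, by omega⟩ : Fin n) else 0

/-- `χ_{S₊^{n-1}} - χ_{S₋^{n-1}}`, difference of the indicators of the closed
upper and lower hemispheres. -/
def hemiDiff (n : ℕ) (η : EuclideanSpace ℝ (Fin n)) : ℝ :=
  (if 0 ≤ lastCoord n η then (1 : ℝ) else 0) - (if lastCoord n η ≤ 0 then (1 : ℝ) else 0)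

/-- `U_h = P_h[χ_{S₊^{n-1}} - χ_{S₋^{n-1}}]`, the invariant Poisson integral of the
difference of hemisphere indicators. -/
def Uh (n : ℕ) (x : EuclideanSpace ℝ (Fin n)) : ℝ :=
  ∫ η : Sph n, Ph n x η.1 * hemiDiff n η.1 ∂ sphereMeasure n

open scoped Pointwise ENNReal RealInnerProductSpace

theorem norm_integral_smul_le_of_integral_eq_zero {α E : Type*} [MeasurableSpace α]
    {μ : Measure α} [IsFiniteMeasure μ] [NormedAddCommGroup E] [NormedSpace ℝ E]
    {f : α → E} {k : α → ℝ} (hf : MemLp f ∞ μ) (hf0 : ∫ a, f a ∂μ = 0)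
    (hk : Integrable k μ) (c : ℝ) :
    ‖∫ a, k a • f a ∂μ‖ ≤ (∫ a, |k a - c| ∂μ) * lpNorm f ∞ μ := by
  have hkc : Integrable (fun a => k a - c) μ := hk.sub (integrable_const c)
  have hshift : ∫ a, k a • f a ∂μ = ∫ a, (k a - c) • f a ∂μ := by
    have hkf : Integrable (fun a => k a • f a) μ := hk.smul_of_top_left hf
    have hcf : Integrable (fun a => c • f a) μ := (integrable_const c).smul_of_top_left hf
    simp_rw [sub_smul]
    rw [integral_sub hkf hcf, integral_smul, hf0, smul_zero, sub_zero]
  calc ‖∫ a, k a • f a ∂μ‖ = ‖∫ a, (k a - c) • f a ∂μ‖ := by rw [hshift]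
    _ ≤ ∫ a, ‖(k a - c) • f a‖ ∂μ := norm_integral_le_integral_norm _
    _ ≤ ∫ a, |k a - c| * lpNorm f ∞ μ ∂μ := by
      refine integral_mono_of_nonneg (ae_of_all _ fun a => norm_nonneg _)
        (hkc.abs.mul_const _) ?_
      filter_upwards [ae_le_lpNorm_exponent_top hf] with a ha
      rw [norm_smul, Real.norm_eq_abs]
      gcongr
    _ = (∫ a, |k a - c| ∂μ) * lpNorm f ∞ μ := integral_mul_const _ _

theorem exists_linearIsometryEquiv_apply_eq {F : Type*} [NormedAddCommGroup F]
    [InnerProductSpace ℝ F] [CompleteSpace F] {x y : F} (h : ‖x‖ = ‖y‖) :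
    ∃ A : F ≃ₗᵢ[ℝ] F, A x = y :=
  ⟨_, Submodule.reflection_sub h⟩

namespace LinearIsometryEquiv

variable {E : Type*} [NormedAddCommGroup E] [NormedSpace ℝ E]

def sphereHomeomorph (A : E ≃ₗᵢ[ℝ] E) : sphere (0 : E) 1 ≃ₜ sphere (0 : E) 1 :=
  A.toHomeomorph.subtype fun x => by simp

@[simp]
lemma coe_sphereHomeomorph (A : E ≃ₗᵢ[ℝ] E) (η : sphere (0 : E) 1) :
    (A.sphereHomeomorph η : E) = A η := rfl

lemma image_Ioo_smul (A : E ≃ₗᵢ[ℝ] E) (T : Set E) :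
    A '' (Ioo (0 : ℝ) 1 • T) = Ioo (0 : ℝ) 1 • A '' T := by
  simp_rw [← iUnion_smul_set, image_iUnion₂, image_smul_set]

variable [MeasurableSpace E] [BorelSpace E]

/-- `μ.toSphere s` is `μ` of the cone `Ioo 0 1 • s`, and `A` maps cones to cones. -/
theorem measurePreserving_sphereHomeomorph (A : E ≃ₗᵢ[ℝ] E) {μ : Measure E}
    (hA : MeasurePreserving A μ μ) :
    MeasurePreserving A.sphereHomeomorph μ.toSphere μ.toSphere := by
  have hmeas := A.sphereHomeomorph.measurable
  refine ⟨hmeas, Measure.ext fun s hs => ?_⟩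
  have himage : ((↑) '' (A.sphereHomeomorph ⁻¹' s) : Set E) = A.symm '' ((↑) '' s) := by
    rw [← A.sphereHomeomorph.image_symm, image_image, image_image]; rfl
  rw [Measure.map_apply hmeas hs, Measure.toSphere_apply' _ (hmeas hs),
    Measure.toSphere_apply' _ hs, himage, ← image_Ioo_smul, image_eq_preimage_symm, symm_symm,
    hA.measure_preimage_emb A.toHomeomorph.measurableEmbedding]

end LinearIsometryEquiv

section Sphere

variable {n : ℕ}

instance [NeZero n] : IsProbabilityMeasure (sphereMeasure n) := by
  have : NeZero (volume : Measure (EuclideanSpace ℝ (Fin n))).toSphere :=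
    ⟨Measure.toSphere_ne_zero _⟩
  unfold sphereMeasure
  infer_instance

theorem integral_sphereMeasure_comp {G : Type*} [NormedAddCommGroup G] [NormedSpace ℝ G]
    (A : EuclideanSpace ℝ (Fin n) ≃ₗᵢ[ℝ] EuclideanSpace ℝ (Fin n)) (g : Sph n → G) :
    ∫ η, g (A.sphereHomeomorph η) ∂sphereMeasure n = ∫ η, g η ∂sphereMeasure n := by
  have hA := A.measurePreserving_sphereHomeomorph A.measurePreserving
  refine MeasurePreserving.integral_comp' (f := A.sphereHomeomorph.toMeasurableEquiv) ?_ g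
  refine ⟨hA.measurable, ?_⟩
  unfold sphereMeasure
  rw [Measure.map_smul]
  exact congrArg _ hA.map_eq

end Sphere

section Kernel

variable {n : ℕ}

lemma norm_eLast [NeZero n] : ‖eLast n‖ = 1 := by
  simp [eLast, Nat.pos_of_neZero n]

lemma norm_smul_eLast [NeZero n] {r : ℝ} (hr : 0 ≤ r) : ‖r • eLast n‖ = r := by
  rw [norm_smul, norm_eLast, Real.norm_of_nonneg hr, mul_one]

lemma inner_eLast [NeZero n] (η : EuclideanSpace ℝ (Fin n)) :
    ⟪eLast n, η⟫ = lastCoord n η := by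
  simp [eLast, lastCoord, Nat.pos_of_neZero n, EuclideanSpace.inner_single_left]

lemma abs_lastCoord_le [NeZero n] (η : EuclideanSpace ℝ (Fin n)) :
    |lastCoord n η| ≤ ‖η‖ := by
  simpa [inner_eLast, norm_eLast] using abs_real_inner_le_norm (eLast n) η

lemma continuous_lastCoord : Continuous (lastCoord n) := by
  unfold lastCoord
  split_ifs <;> fun_prop

lemma measurable_hemiDiff : Measurable (hemiDiff n) := by
  have h := continuous_lastCoord (n := n).measurable
  unfold hemiDiff
  exact (Measurable.ite (measurableSet_le measurable_const h) measurable_const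
    measurable_const).sub (Measurable.ite (measurableSet_le h measurable_const)
    measurable_const measurable_const)

lemma hemiDiff_eq_sign (η : EuclideanSpace ℝ (Fin n)) :
    hemiDiff n η = SignType.sign (lastCoord n η) := by
  unfold hemiDiff
  rcases lt_trichotomy (lastCoord n η) 0 with h | h | h
  · simp [h, h.le, h.not_ge]
  · simp [h]
  · simp [h, h.le, h.not_ge]

lemma integrable_hemiDiff [NeZero n] :
    Integrable (fun η : Sph n => hemiDiff n η) (sphereMeasure n) := by
  refine .of_bound (measurable_hemiDiff.comp measurable_subtype_coe).aestronglyMeasurable 1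
    (ae_of_all _ fun η => ?_)
  rw [hemiDiff_eq_sign, Real.norm_eq_abs]
  rcases lt_trichotomy (lastCoord n η) 0 with h | h | h <;> simp [h]

theorem integral_hemiDiff [NeZero n] : ∫ η : Sph n, hemiDiff n η ∂sphereMeasure n = 0 := by
  set R := (ℝ ∙ eLast n)ᗮ.reflection
  have hR : ∀ η, lastCoord n (R η) = -lastCoord n η := fun η => by
    have := R.inner_map_map (eLast n) η
    rw [Submodule.reflection_orthogonalComplement_singleton_eq_neg, inner_neg_left,
      inner_eLast, inner_eLast] at this
    linarith
  have := integral_sphereMeasure_comp R fun η => hemiDiff n η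
  simp only [LinearIsometryEquiv.coe_sphereHomeomorph, hemiDiff_eq_sign, hR, Left.sign_neg,
    SignType.coe_neg, integral_neg] at this
  simp only [hemiDiff_eq_sign]
  linarith

lemma Ph_zero_left {η : EuclideanSpace ℝ (Fin n)} (hη : ‖η‖ = 1) : Ph n 0 η = 1 := by
  simp [Ph, hη]

lemma Ph_map (A : EuclideanSpace ℝ (Fin n) ≃ₗᵢ[ℝ] EuclideanSpace ℝ (Fin n))
    (x η : EuclideanSpace ℝ (Fin n)) : Ph n (A x) (A η) = Ph n x η := by
  simp only [Ph, A.norm_map, ← map_sub]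

lemma continuous_Ph {x : EuclideanSpace ℝ (Fin n)} (hx : ‖x‖ < 1) :
    Continuous fun η : Sph n => Ph n x η := by
  refine (continuous_const.div (by fun_prop) fun η => ?_).pow _
  have : x ≠ η := fun h => by simp [h] at hx
  exact pow_ne_zero _ (norm_ne_zero_iff.2 (sub_ne_zero.2 this))

lemma integrable_Ph [NeZero n] {x : EuclideanSpace ℝ (Fin n)} (hx : ‖x‖ < 1) :
    Integrable (fun η : Sph n => Ph n x η) (sphereMeasure n) :=
  (continuous_Ph hx).integrable_of_hasCompactSupport (.of_compactSpace _)

theorem integral_comp_Ph_map {G : Type*} [NormedAddCommGroup G] [NormedSpace ℝ G]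
    (A : EuclideanSpace ℝ (Fin n) ≃ₗᵢ[ℝ] EuclideanSpace ℝ (Fin n)) (g : ℝ → G)
    (x : EuclideanSpace ℝ (Fin n)) :
    ∫ η : Sph n, g (Ph n (A x) η) ∂sphereMeasure n =
      ∫ η : Sph n, g (Ph n x η) ∂sphereMeasure n := by
  rw [← integral_sphereMeasure_comp A]
  simp only [LinearIsometryEquiv.coe_sphereHomeomorph, Ph_map]

end Kernel

section Equator

variable {n : ℕ}

lemma Ph_smul_eLast [NeZero n] {r : ℝ} (hr : 0 ≤ r) {η : EuclideanSpace ℝ (Fin n)}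
    (hη : ‖η‖ = 1) :
    Ph n (r • eLast n) η = ((1 - r ^ 2) / (1 + r ^ 2 - 2 * r * lastCoord n η)) ^ (n - 1) := by
  rw [Ph, norm_smul_eLast hr, norm_sub_sq_real, real_inner_smul_left, inner_eLast,
    norm_smul_eLast hr, hη]
  ring_nf

def PhEquator (n : ℕ) (r : ℝ) : ℝ := ((1 - r ^ 2) / (1 + r ^ 2)) ^ (n - 1)

lemma Ph_smul_eLast_sub_PhEquator_mul_hemiDiff [NeZero n] {r : ℝ} (hr0 : 0 ≤ r) (hr1 : r < 1)
    {η : EuclideanSpace ℝ (Fin n)} (hη : ‖η‖ = 1) :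
    (Ph n (r • eLast n) η - PhEquator n r) * hemiDiff n η
      = |Ph n (r • eLast n) η - PhEquator n r| := by
  have ht := abs_le.1 (hη ▸ abs_lastCoord_le η)
  rw [Ph_smul_eLast hr0 hη, PhEquator, hemiDiff_eq_sign]
  generalize lastCoord n η = t at ht ⊢
  have hnum : 0 ≤ 1 - r ^ 2 := by nlinarith
  have hden : 0 < 1 + r ^ 2 - 2 * r * t := by nlinarith
  rcases lt_trichotomy t 0 with h | rfl | h
  · have : ((1 - r ^ 2) / (1 + r ^ 2 - 2 * r * t)) ^ (n - 1)
        ≤ ((1 - r ^ 2) / (1 + r ^ 2)) ^ (n - 1) := by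
      gcongr; nlinarith
    rw [sign_neg h, abs_of_nonpos (sub_nonpos.2 this)]
    simp
  · simp
  · have : ((1 - r ^ 2) / (1 + r ^ 2)) ^ (n - 1)
        ≤ ((1 - r ^ 2) / (1 + r ^ 2 - 2 * r * t)) ^ (n - 1) := by
      gcongr; nlinarith
    rw [sign_pos h, abs_of_nonneg (sub_nonneg.2 this)]
    simp

theorem Uh_smul_eLast [NeZero n] {r : ℝ} (hr0 : 0 ≤ r) (hr1 : r < 1) :
    Uh n (r • eLast n) =
      ∫ η : Sph n, |Ph n (r • eLast n) η - PhEquator n r| ∂sphereMeasure n := by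
  have hint : Integrable (fun η : Sph n => |Ph n (r • eLast n) η - PhEquator n r|)
      (sphereMeasure n) :=
    ((integrable_Ph (by rwa [norm_smul_eLast hr0])).sub (integrable_const _)).abs
  calc Uh n (r • eLast n)
      = ∫ η : Sph n, (|Ph n (r • eLast n) η - PhEquator n r| + PhEquator n r * hemiDiff n η)
          ∂sphereMeasure n := by
        refine integral_congr_ae (ae_of_all _ fun η => ?_)
        beta_reduce
        rw [← Ph_smul_eLast_sub_PhEquator_mul_hemiDiff hr0 hr1 (norm_eq_of_mem_sphere η)]
        ring
    _ = ∫ η : Sph n, |Ph n (r • eLast n) η - PhEquator n r| ∂sphereMeasure n := by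
        rw [integral_add hint (integrable_hemiDiff.const_mul _), integral_const_mul,
          integral_hemiDiff, mul_zero, add_zero]

end Equator

/-- Schwarz-type lemma for `p = ∞`: if `u = P_h[φ]` with `φ` essentially
bounded and `u(0) = 0`, then `|u(x)| ≤ U_h(|x| e_n) ‖φ‖_{L^∞}`. -/
theorem stmt16 (n : ℕ) (hn : 2 ≤ n) (φ : Sph n → EuclideanSpace ℝ (Fin n))
    (hmeas : Measurable φ) (hbdd : eLpNorm φ ⊤ (sphereMeasure n) < ⊤)
    (u : EuclideanSpace ℝ (Fin n) → EuclideanSpace ℝ (Fin n))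
    (hu : ∀ x ∈ Metric.ball (0 : EuclideanSpace ℝ (Fin n)) 1,
      u x = ∫ η : Sph n, Ph n x η.1 • φ η ∂ sphereMeasure n)
    (hu0 : u 0 = 0)
    (x : EuclideanSpace ℝ (Fin n)) (hx : x ∈ Metric.ball (0 : EuclideanSpace ℝ (Fin n)) 1) :
    ‖u x‖ ≤ Uh n (‖x‖ • eLast n) * (eLpNorm φ ⊤ (sphereMeasure n)).toReal := by
  have : NeZero n := ⟨by omega⟩
  have hx1 : ‖x‖ < 1 := mem_ball_zero_iff.1 hx
  have hφ : MemLp φ ∞ (sphereMeasure n) := ⟨hmeas.aestronglyMeasurable, hbdd⟩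
  have hmean : ∫ η, φ η ∂sphereMeasure n = 0 := by
    simpa [hu0, Ph_zero_left] using (hu 0 (mem_ball_self one_pos)).symm
  obtain ⟨A, hA⟩ :=
    exists_linearIsometryEquiv_apply_eq (norm_smul_eLast (n := n) (norm_nonneg x))
  rw [hu x hx, toReal_eLpNorm hφ.1, Uh_smul_eLast (norm_nonneg x) hx1,
    ← integral_comp_Ph_map A (fun t => |t - PhEquator n ‖x‖|), hA]
  exact norm_integral_smul_le_of_integral_eq_zero hφ hmean (integrable_Ph hx1) _
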